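/- For φ ∈ [−π/2, 0], define λ(φ) = (2 cos φ + 2 cos φ sin φ)/8 and λ'(φ) = (−2 sin φ + 2 cos 2φ)/8, and set ṡ(φ) = 2λ(φ)·cos φ − λ'(φ)·sin φ and ν̇(φ) = 2λ(φ)·sin φ + λ'(φ)·cos φ. Then for every φ ∈ [−π/2, 0] one has ṡ(φ)² − 3·ν̇(φ)² = (cos 2φ − sin φ)² / 16. -/

import Mathlib

open Real

/-!
Write `s = sin φ`, `c = cos φ`. Then `λ = c (1 + s) / 4` and, using `cos 2φ = 1 - 2 s²`,
`λ' = (1 + s)(1 - 2s) / 4`, so the common factor `(1 + s) / 4` comes out of both components: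
`ṡ = (1 + s)(2 - s) / 4` (after `c² = 1 - s²`) and `ν̇ = (1 + s) c / 4`. Hence
`ṡ² - 3ν̇² = (1 + s)² ((2 - s)² - 3c²) / 16 = (1 + s)² (1 - 2s)² / 16`,
and `(1 + s)(1 - 2s) = cos 2φ - sin φ`.
-/

section UnitCircle

variable {s c : ℝ}

theorem sDot_eq_of_cos_sq (hc : c ^ 2 = 1 - s ^ 2) :
    2 * ((2 * c + 2 * c * s) / 8) * c - ((-2 * s + 2 * (1 - 2 * s ^ 2)) / 8) * s
      = (1 + s) * (2 - s) / 4 := by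
  linear_combination (1 + s) / 2 * hc

theorem nuDot_eq : 2 * ((2 * c + 2 * c * s) / 8) * s + ((-2 * s + 2 * (1 - 2 * s ^ 2)) / 8) * c
      = (1 + s) * c / 4 := by
  ring

theorem sDot_sq_sub_three_nuDot_sq_of_cos_sq (hc : c ^ 2 = 1 - s ^ 2) :
    ((1 + s) * (2 - s) / 4) ^ 2 - 3 * ((1 + s) * c / 4) ^ 2 = ((1 + s) * (1 - 2 * s)) ^ 2 / 16 := by
  linear_combination -3 * (1 + s) ^ 2 / 16 * hc

end UnitCircle

theorem stmt_7 (φ : ℝ) :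
    (2 * ((2 * Real.cos φ + 2 * Real.cos φ * Real.sin φ) / 8) * Real.cos φ
        - ((-2 * Real.sin φ + 2 * Real.cos (2*φ)) / 8) * Real.sin φ)^2
      - 3 * (2 * ((2 * Real.cos φ + 2 * Real.cos φ * Real.sin φ) / 8) * Real.sin φ
        + ((-2 * Real.sin φ + 2 * Real.cos (2*φ)) / 8) * Real.cos φ)^2
      = (Real.cos (2*φ) - Real.sin φ)^2 / 16 := by
  have hc : cos φ ^ 2 = 1 - sin φ ^ 2 := cos_sq' φ
  have hfactor : 1 - 2 * sin φ ^ 2 - sin φ = (1 + sin φ) * (1 - 2 * sin φ) := by ring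
  rw [cos_two_mul_eq_one_sub, sDot_eq_of_cos_sq hc, nuDot_eq, hfactor]
  exact sDot_sq_sub_three_nuDot_sq_of_cos_sq hc
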